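/- Let R = ⊕_{n≥0} R_n be a standard graded Noetherian ring whose degree-zero part R₀ = (A, 𝔪) is an Artinian local ring, such that 𝔭 = 𝔪R is a prime ideal of R, and let M be a nonzero finitely generated graded R-module with Ass_R M = {𝔭} and M = R·M_t. Then there exist families of graded R-modules {M^i}_{0≤i≤i₀} and {X^i}_{0≤i≤i₀−1} with M⁰ = M and M^{i₀} = 0 such that for every 0 ≤ i ≤ i₀−1: (a) Ass_R M^i = {𝔭} and M^i = R·(M^i)_t; (b) 𝔭 ∉ Ass_R X^i; and (c) there are graded exact sequences 0 → (R/𝔭)(−t) → M^i → N^i → 0 and 0 → X^i → N^i → M^{i+1} → 0. Moreover i₀ = ℓ_{R_𝔭}(M_𝔭), the length of M_𝔭 over R_𝔭. -/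

import Mathlib

/-!
Let `𝔭 = 𝔪R`. Since `𝔪` is nilpotent, so is `𝔭`, and every prime of `R` contains `𝔭`; hence for a
proper submodule `K` we have `Ass (M/K) = {𝔭}` exactly when `K` is `𝔭`-saturated, i.e. `K` is the
kernel of `M → (M/K)_𝔭`.

Starting from `K = 0`, choose `z ∈ M_t ∖ K` and `a ∈ 𝔪^(n-1)` with `a z ∉ K`, where `n` is least
with `𝔪^n z ⊆ K`; then `x = a z` is homogeneous of degree `t` with `(K : x) = 𝔭`. Replace `K` by
the `𝔭`-saturation of `K + R x` and repeat; the chain strictly increases, so it reaches `M` by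
Noetherianity.

The saturation of a graded submodule is graded. It suffices that saturating by homogeneous
elements outside `𝔭` already gives a `𝔭`-saturated module. For `s ∉ 𝔭`, let `c` be the lowest
degree with `s_c ∉ 𝔭` and `τ` the sum of the components of `s` of degree `≥ c`. Then `s - τ ∈ 𝔭`
is nilpotent, so `s ∣ τ^k`. Since the lowest component `s_c` of `τ` is homogeneous outside `𝔭`,
comparing lowest-degree components shows that `τ`, hence `s`, acts injectively modulo any graded
submodule that is saturated with respect to homogeneous elements outside `𝔭`.

After localizing at `𝔭` each step adjoins an element whose annihilator is the maximal ideal, so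
the localized chain is a composition series of `M_𝔭` of length `i₀`.
-/

open IsLocalRing

/-- The length of a module, as an integer (the Krull dimension of its lattice of
submodules, i.e. the longest chain of submodules; `0` if infinite). -/
noncomputable def moduleLength (R M : Type*) [Ring R] [AddCommGroup M] [Module R M] : ℤ :=
  ((WithBot.unbotD 0 (Order.krullDim (Submodule R M))).toNat : ℤ)

/-- The length of the localization `M_𝔭` over `R_𝔭`. -/
noncomputable def locLength (R : Type*) [CommRing R] (p : Ideal R) [p.IsPrime]
    (M : Type*) [AddCommGroup M] [Module R M] : ℤ :=
  moduleLength (Localization p.primeCompl) (LocalizedModule p.primeCompl M)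

/-- An `R`-submodule `N` of a graded module `M` is graded if it contains all homogeneous
components of its elements. -/
def IsGradedSubmodule {A R M : Type*} [CommRing A] [CommRing R] [Algebra A R]
    [AddCommGroup M] [Module A M] [Module R M]
    (ℳ : ℤ → Submodule A M) [DirectSum.Decomposition ℳ] (N : Submodule R M) : Prop :=
  ∀ x ∈ N, ∀ n : ℤ, ((DirectSum.decompose ℳ x n : ℳ n) : M) ∈ N

namespace Submodule

variable {R M : Type*} [CommRing R] [AddCommGroup M] [Module R M] (S : Submonoid R)

noncomputable def saturation (N : Submodule R M) : Submodule R M :=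
  ((N.localized S).restrictScalars R).comap (LocalizedModule.mkLinearMap S M)

variable {S} {N : Submodule R M}

theorem mem_saturation {m : M} : m ∈ N.saturation S ↔ ∃ s ∈ S, s • m ∈ N := by
  constructor
  · rintro ⟨n, hn, s, hns⟩
    rw [IsLocalizedModule.mk'_eq_iff, ← LinearMap.map_smul_of_tower] at hns
    obtain ⟨c, hc⟩ := (IsLocalizedModule.eq_iff_exists S _).mp hns
    refine ⟨c * s, (c * s).2, ?_⟩
    rw [mul_smul, ← Submonoid.smul_def, ← Submonoid.smul_def, ← hc]
    exact N.smul_mem _ hn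
  · rintro ⟨s, hs, hsm⟩
    exact ⟨s • m, hsm, ⟨s, hs⟩, IsLocalizedModule.mk'_cancel _ _ _⟩

theorem mkLinearMap_mem_localized_iff {m : M} :
    LocalizedModule.mkLinearMap S M m ∈ N.localized S ↔ m ∈ N.saturation S :=
  Iff.rfl

theorem le_saturation : N ≤ N.saturation S :=
  (localized'gi (Localization S) S (LocalizedModule.mkLinearMap S M)).gc.le_u_l N

theorem localized_saturation : (N.saturation S).localized S = N.localized S :=
  (localized'gi (Localization S) S (LocalizedModule.mkLinearMap S M)).l_u_eq _

theorem saturation_saturation : (N.saturation S).saturation S = N.saturation S := by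
  rw [saturation, localized_saturation]
  rfl

theorem saturation_mono_submonoid {S' : Submonoid R} (h : S ≤ S') :
    N.saturation S ≤ N.saturation S' := fun _ hm ↦ by
  obtain ⟨s, hs, hsm⟩ := mem_saturation.mp hm
  exact mem_saturation.mpr ⟨s, h hs, hsm⟩

theorem saturation_mono {N' : Submodule R M} (h : N ≤ N') : N.saturation S ≤ N'.saturation S :=
  fun _ hm ↦ by
    obtain ⟨s, hs, hsm⟩ := mem_saturation.mp hm
    exact mem_saturation.mpr ⟨s, hs, h hsm⟩

end Submodule

section Graded

open DirectSum

variable {A R M : Type*} [CommRing A] [CommRing R]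
  [AddCommGroup M] [Module A M] [Module R M] {ℳ : ℤ → Submodule A M} [Decomposition ℳ]

theorem mem_of_forall_decompose_mem {N : Submodule R M} {m : M}
    (h : ∀ n, (decompose ℳ m n : M) ∈ N) : m ∈ N := by
  classical
  rw [← sum_support_decompose ℳ m]
  exact N.sum_mem fun n _ ↦ h n

theorem exists_decompose_notMem_forall_lt_mem {N : Submodule R M} {m : M} (hm : m ∉ N) :
    ∃ e, (decompose ℳ m e : M) ∉ N ∧ ∀ f < e, (decompose ℳ m f : M) ∈ N := by
  classical
  have mem_support {f} (hf : (decompose ℳ m f : M) ∉ N) : f ∈ (decompose ℳ m).support :=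
    DFinsupp.mem_support_iff.mpr fun h ↦ hf (by simp [h])
  set F := (decompose ℳ m).support.filter fun f ↦ (decompose ℳ m f : M) ∉ N
  have hF : F.Nonempty := by
    by_contra hF
    refine hm (mem_of_forall_decompose_mem (ℳ := ℳ) fun f ↦ ?_)
    by_contra hf
    exact hF ⟨f, Finset.mem_filter.mpr ⟨mem_support hf, hf⟩⟩
  obtain ⟨e, he, hmin⟩ := F.exists_min_image id hF
  refine ⟨e, (Finset.mem_filter.mp he).2, fun f hfe ↦ ?_⟩
  by_contra hf
  exact (hmin f (Finset.mem_filter.mpr ⟨mem_support hf, hf⟩)).not_gt hfe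

variable [Algebra A R]

theorem isGradedSubmodule_bot : IsGradedSubmodule ℳ (⊥ : Submodule R M) := fun m hm n ↦ by
  simp [(Submodule.mem_bot R).mp hm]

theorem IsGradedSubmodule.sup {N N' : Submodule R M} (hN : IsGradedSubmodule ℳ N)
    (hN' : IsGradedSubmodule ℳ N') : IsGradedSubmodule ℳ (N ⊔ N') := by
  intro m hm n
  obtain ⟨a, ha, b, hb, rfl⟩ := Submodule.mem_sup.mp hm
  rw [decompose_add, DirectSum.add_apply, Submodule.coe_add]
  exact add_mem (Submodule.mem_sup_left (hN a ha n)) (Submodule.mem_sup_right (hN' b hb n))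

section

variable (𝒜 : ℤ → Submodule A R) [SetLike.GradedSMul 𝒜 ℳ]

theorem coe_decompose_smul_of_mem {r : R} {j : ℤ} (hr : r ∈ 𝒜 j) (m : M) (n : ℤ) :
    (decompose ℳ (r • m) n : M) = r • (decompose ℳ m (n - j) : M) := by
  induction m using Decomposition.inductionOn ℳ with
  | zero => simp
  | @homogeneous i m =>
    have hrm : r • (m : M) ∈ ℳ (j + i) := SetLike.GradedSMul.smul_mem hr m.2
    by_cases h : n = j + i
    · subst h
      rw [decompose_of_mem_same ℳ hrm, add_sub_cancel_left, decompose_coe, of_eq_same]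
    · rw [decompose_of_mem_ne ℳ hrm (Ne.symm h), decompose_of_mem_ne ℳ m.2 (by omega),
        smul_zero]
  | add x y hx hy =>
    rw [smul_add, decompose_add, DirectSum.add_apply, Submodule.coe_add, hx, hy, decompose_add,
      DirectSum.add_apply, Submodule.coe_add, smul_add]

variable [GradedAlgebra 𝒜]

theorem coe_decompose_smul [∀ (i : ℤ) (x : 𝒜 i), Decidable (x ≠ 0)] (r : R) (m : M) (n : ℤ) :
    (decompose ℳ (r • m) n : M) =
      ∑ j ∈ (decompose 𝒜 r).support, (decompose 𝒜 r j : R) • (decompose ℳ m (n - j) : M) := by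
  conv_lhs => rw [← sum_support_decompose 𝒜 r]
  rw [Finset.sum_smul, decompose_sum, DFinsupp.finsetSum_apply, Submodule.coe_sum]
  exact Finset.sum_congr rfl fun j _ ↦ coe_decompose_smul_of_mem 𝒜 (decompose 𝒜 r j).2 m n

theorem IsGradedSubmodule.saturation {N : Submodule R M} (hN : IsGradedSubmodule ℳ N)
    {S : Submonoid R} (hS : S ≤ SetLike.homogeneousSubmonoid 𝒜) :
    IsGradedSubmodule ℳ (N.saturation S) := by
  intro m hm n
  obtain ⟨s, hs, hsm⟩ := Submodule.mem_saturation.mp hm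
  obtain ⟨d, hd⟩ := hS hs
  refine Submodule.mem_saturation.mpr ⟨s, hs, ?_⟩
  have := hN _ hsm (n + d)
  rwa [coe_decompose_smul_of_mem 𝒜 hd, add_sub_cancel_right] at this

/-- If `e` is the lowest degree with `m_e ∉ N`, the component of `a • m` in degree `c + e` is
`a_c • m_e` modulo `N`. -/
theorem IsGradedSubmodule.mem_of_smul_mem {N : Submodule R M} (hN : IsGradedSubmodule ℳ N)
    {a : R} {c : ℤ} (ha : ∀ j < c, (decompose 𝒜 a j : R) = 0)
    (hc : ∀ y, (decompose 𝒜 a c : R) • y ∈ N → y ∈ N) {m : M} (ham : a • m ∈ N) : m ∈ N := by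
  classical
  by_contra hm
  obtain ⟨e, he, hlow⟩ := exists_decompose_notMem_forall_lt_mem (ℳ := ℳ) hm
  refine he (hc _ ?_)
  have hsum := hN _ ham (c + e)
  rw [coe_decompose_smul 𝒜] at hsum
  by_cases hc' : c ∈ (decompose 𝒜 a).support
  · have hrest : ∀ j ∈ (decompose 𝒜 a).support.erase c,
        (decompose 𝒜 a j : R) • (decompose ℳ m (c + e - j) : M) ∈ N := by
      intro j hj
      obtain ⟨hjc, hj⟩ := Finset.mem_erase.mp hj
      have : c ≤ j := not_lt.mp fun hlt ↦
        DFinsupp.mem_support_iff.mp hj (Subtype.ext (ha j hlt))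
      exact N.smul_mem _ (hlow _ (by omega))
    rw [← Finset.add_sum_erase _ _ hc', add_sub_cancel_left] at hsum
    exact (N.add_mem_iff_left (N.sum_mem hrest)).mp hsum
  · rw [DFinsupp.notMem_support_iff.mp hc', ZeroMemClass.coe_zero, zero_smul]
    exact N.zero_mem

theorem IsGradedSubmodule.saturation_primeCompl_eq_of_homogeneous {p : Ideal R} [p.IsPrime]
    (hp : p ≤ nilradical R) {N : Submodule R M} (hN : IsGradedSubmodule ℳ N)
    (hNh : N.saturation (SetLike.homogeneousSubmonoid 𝒜 ⊓ p.primeCompl) = N) :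
    N.saturation p.primeCompl = N := by
  classical
  refine le_antisymm (fun m hm ↦ ?_) Submodule.le_saturation
  obtain ⟨s, hs, hsm⟩ := Submodule.mem_saturation.mp hm
  obtain ⟨c, hc, hlow⟩ := exists_decompose_notMem_forall_lt_mem (ℳ := 𝒜) (N := p) hs
  set τ : R := (decompose 𝒜).symm ((decompose 𝒜 s).filter (c ≤ ·))
  have hτ (j : ℤ) : (decompose 𝒜 τ j : R) = if c ≤ j then (decompose 𝒜 s j : R) else 0 := by
    simp only [τ, Equiv.apply_symm_apply, DFinsupp.filter_apply]
    split_ifs <;> rfl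
  obtain ⟨k, hk⟩ : IsNilpotent (τ - s) := hp <| mem_of_forall_decompose_mem (ℳ := 𝒜) fun j ↦ by
    rw [decompose_sub, DirectSum.sub_apply, Submodule.coe_sub, hτ]
    split_ifs with hj
    · simp
    · simpa using neg_mem (hlow j (not_le.mp hj))
  obtain ⟨u, hu⟩ : s ∣ τ ^ k := by simpa [hk] using sub_dvd_pow_sub_pow τ (τ - s) k
  have hτN (y : M) : τ • y ∈ N → y ∈ N := by
    refine hN.mem_of_smul_mem 𝒜 (c := c) (fun j hj ↦ by rw [hτ, if_neg (not_le.mpr hj)])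
      (fun y hy ↦ ?_)
    rw [hτ, if_pos le_rfl] at hy
    rw [← hNh]
    exact Submodule.mem_saturation.mpr ⟨_, ⟨⟨c, (decompose 𝒜 s c).2⟩, hc⟩, hy⟩
  have hpow (i : ℕ) : τ ^ i • m ∈ N → m ∈ N := by
    induction i with
    | zero => simp
    | succ i ih => exact fun h ↦ ih (hτN _ (by rwa [pow_succ', mul_smul] at h))
  exact hpow k (by rw [hu, mul_comm, mul_smul]; exact N.smul_mem u hsm)

end

theorem isGradedSubmodule_span_singleton (𝒜 : ℤ → Submodule A R) [GradedAlgebra 𝒜]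
    [SetLike.GradedSMul 𝒜 ℳ] {x : M} {t : ℤ} (hx : x ∈ ℳ t) :
    IsGradedSubmodule ℳ (Submodule.span R {x}) := by
  classical
  intro m hm n
  obtain ⟨r, rfl⟩ := Submodule.mem_span_singleton.mp hm
  rw [coe_decompose_smul 𝒜]
  refine Submodule.sum_mem _ fun j _ ↦ ?_
  by_cases h : n - j = t
  · rw [h, decompose_of_mem_same ℳ hx]
    exact Submodule.smul_mem _ _ (Submodule.mem_span_singleton_self x)
  · rw [decompose_of_mem_ne ℳ hx (Ne.symm h), smul_zero]
    exact Submodule.zero_mem _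

theorem IsGradedSubmodule.saturation_primeCompl (𝒜 : ℤ → Submodule A R) [GradedAlgebra 𝒜]
    [SetLike.GradedSMul 𝒜 ℳ] {p : Ideal R} [p.IsPrime] (hp : p ≤ nilradical R) {N : Submodule R M}
    (hN : IsGradedSubmodule ℳ N) : IsGradedSubmodule ℳ (N.saturation p.primeCompl) := by
  set S := SetLike.homogeneousSubmonoid 𝒜 ⊓ p.primeCompl
  have hS : IsGradedSubmodule ℳ (N.saturation S) := hN.saturation 𝒜 inf_le_left
  have hSp : (N.saturation S).saturation p.primeCompl = N.saturation S :=
    hS.saturation_primeCompl_eq_of_homogeneous 𝒜 hp Submodule.saturation_saturation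
  have : N.saturation p.primeCompl = N.saturation S :=
    le_antisymm (hSp ▸ Submodule.saturation_mono Submodule.le_saturation)
      (Submodule.saturation_mono_submonoid inf_le_right)
  exact this ▸ hS

end Graded

section Saturated

variable {R M : Type*} [CommRing R] [AddCommGroup M] [Module R M] {p : Ideal R} [p.IsPrime]

theorem saturation_bot_eq_bot_of_associatedPrimes_subset [IsNoetherianRing R]
    (h : associatedPrimes R M ⊆ {p}) : (⊥ : Submodule R M).saturation p.primeCompl = ⊥ := by
  refine le_bot_iff.mp fun m hm ↦ ?_
  obtain ⟨s, hs, hsm⟩ := Submodule.mem_saturation.mp hm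
  have hreg : s ∉ ⋃ P ∈ associatedPrimes R M, (P : Set R) := by
    simp only [Set.mem_iUnion]
    rintro ⟨P, hP, hsP⟩
    exact hs (Set.mem_singleton_iff.mp (h hP) ▸ hsP)
  rw [biUnion_associatedPrimes_eq_compl_regular, Set.notMem_compl_iff] at hreg
  exact (hreg : IsSMulRegular M s) (by simpa using hsm)

theorem associatedPrimes_quotient_eq_singleton [IsNoetherianRing R] (hp : p ≤ nilradical R)
    {K : Submodule R M} (hK : K ≠ ⊤) (hKs : K.saturation p.primeCompl = K) :
    associatedPrimes R (M ⧸ K) = {p} := by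
  have : Nontrivial (M ⧸ K) := Submodule.Quotient.nontrivial_iff.mpr hK
  refine (associatedPrimes.nonempty R (M ⧸ K)).subset_singleton_iff.mp fun P hP ↦ ?_
  obtain ⟨hPprime, y, rfl⟩ := isAssociatedPrime_iff.mp hP
  refine le_antisymm (fun s hs ↦ ?_) (hp.trans (nilradical_le_prime _))
  by_contra hsp
  obtain ⟨m, rfl⟩ := Submodule.Quotient.mk_surjective K y
  rw [Submodule.mem_colon_singleton, Submodule.mem_bot, ← Submodule.Quotient.mk_smul,
    Submodule.Quotient.mk_eq_zero] at hs
  have hm : m ∈ K := hKs ▸ Submodule.mem_saturation.mpr ⟨s, hsp, hs⟩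
  apply hPprime.ne_top
  rw [(Submodule.Quotient.mk_eq_zero K).mpr hm, Submodule.colon_singleton_zero]

theorem notMem_associatedPrimes_map_mkQ {J K : Submodule R M}
    (h : K ≤ J.saturation p.primeCompl) : p ∉ associatedPrimes R (K.map J.mkQ) := by
  rintro ⟨-, y, hy⟩
  obtain ⟨m, hm, hmy⟩ := Submodule.mem_map.mp y.2
  obtain ⟨s, hsp, hsJ⟩ := Submodule.mem_saturation.mp (h hm)
  refine hsp (hy ▸ Ideal.le_radical ?_)
  rw [Submodule.mem_colon_singleton, Submodule.mem_bot]
  ext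
  rw [Submodule.coe_smul, ← hmy, ← map_smul, Submodule.mkQ_apply, ZeroMemClass.coe_zero,
    Submodule.Quotient.mk_eq_zero]
  exact hsJ

end Saturated

theorem exists_smul_mem_iff_mem_map {A R M : Type*} [CommRing A] [CommRing R] [Algebra A R]
    [AddCommGroup M] [Module A M] [Module R M] [IsScalarTower A R M] {I : Ideal A}
    (hI : IsNilpotent I) [(I.map (algebraMap A R)).IsPrime] {K : Submodule R M}
    (hK : K.saturation (I.map (algebraMap A R)).primeCompl = K) {z : M} (hz : z ∉ K) :
    ∃ a : A, ∀ r : R, r • a • z ∈ K ↔ r ∈ I.map (algebraMap A R) := by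
  classical
  obtain ⟨k, hk⟩ := hI
  have hex : ∃ n, ∀ a ∈ I ^ n, a • z ∈ K :=
    ⟨k, fun a ha ↦ by simp [(Ideal.mem_bot).mp (hk ▸ ha)]⟩
  have hn : Nat.find hex ≠ 0 := fun h ↦ hz (one_smul A z ▸ (h ▸ Nat.find_spec hex) 1 (by simp))
  obtain ⟨a, ha, haz⟩ : ∃ a ∈ I ^ (Nat.find hex - 1), a • z ∉ K := by
    simpa using Nat.find_min hex (Nat.sub_one_lt hn)
  refine ⟨a, fun r ↦ ⟨fun hr ↦ ?_, fun hr ↦ ?_⟩⟩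
  · by_contra hrp
    exact haz (hK ▸ Submodule.mem_saturation.mpr ⟨r, hrp, hr⟩)
  · have hle : I.map (algebraMap A R) ≤ K.comap (LinearMap.toSpanSingleton R M (a • z)) := by
      refine Ideal.map_le_iff_le_comap.mpr fun b hb ↦ ?_
      change algebraMap A R b • a • z ∈ K
      rw [algebraMap_smul, smul_smul]
      refine Nat.find_spec hex _ ?_
      rw [← Nat.succ_pred_eq_of_ne_zero hn, pow_succ']
      exact Ideal.mul_mem_mul hb ha
    exact hle hr

theorem covBy_sup_span_singleton_of_smul_mem_iff {R M : Type*} [CommRing R] [IsLocalRing R]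
    [AddCommGroup M] [Module R M] {W : Submodule R M} {ξ : M}
    (h : ∀ r : R, r • ξ ∈ W ↔ r ∈ maximalIdeal R) : W ⋖ W ⊔ Submodule.span R {ξ} := by
  have hξ : ξ ∉ W := fun hξ ↦ (maximalIdeal.isMaximal R).ne_top
    ((Ideal.eq_top_iff_one _).mpr ((h 1).mp (by rwa [one_smul])))
  refine ⟨SetLike.lt_iff_le_and_exists.mpr ⟨le_sup_left, ξ, Submodule.mem_sup_right
    (Submodule.mem_span_singleton_self ξ), hξ⟩, fun V hWV hV ↦ ?_⟩
  obtain ⟨v, hvV, hvW⟩ := SetLike.exists_of_lt hWV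
  obtain ⟨w, hw, u, hu, rfl⟩ := Submodule.mem_sup.mp (hV.le hvV)
  obtain ⟨r, rfl⟩ := Submodule.mem_span_singleton.mp hu
  have hr : IsUnit r := notMem_maximalIdeal.mp fun hr ↦ hvW (W.add_mem hw ((h r).mpr hr))
  have hξV : ξ ∈ V := (V.smul_mem_iff_of_isUnit hr).mp (by simpa using V.sub_mem hvV (hWV.le hw))
  exact hV.not_ge (sup_le hWV.le ((Submodule.span_singleton_le_iff_mem ξ V).mpr hξV))

theorem Ideal.map_le_nilradical_of_isNilpotent {A R : Type*} [CommRing A] [CommRing R]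
    (f : A →+* R) {I : Ideal A} (hI : IsNilpotent I) : I.map f ≤ nilradical R := by
  obtain ⟨k, hk⟩ := hI
  refine Ideal.map_le_iff_le_comap.mpr fun a ha ↦ IsNilpotent.map (⟨k, ?_⟩ : IsNilpotent a) f
  simpa [hk] using Ideal.pow_mem_pow ha k

section Localization

variable {R M : Type*} [CommRing R] [AddCommGroup M] [Module R M] (p : Ideal R) [p.IsPrime]

theorem smul_mkLinearMap_mem_localized_iff {K : Submodule R M}
    (hK : K.saturation p.primeCompl = K) {x : M} (hx : ∀ r : R, r • x ∈ K ↔ r ∈ p)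
    (z : Localization.AtPrime p) :
    z • LocalizedModule.mkLinearMap p.primeCompl M x ∈ K.localized p.primeCompl ↔
      z ∈ maximalIdeal (Localization.AtPrime p) := by
  obtain ⟨r, s, rfl⟩ := IsLocalization.exists_mk'_eq p.primeCompl z
  rw [IsLocalization.AtPrime.mk'_mem_maximal_iff (Localization.AtPrime p) p, ← hx,
    ← Submodule.smul_mem_iff_of_isUnit _ (IsLocalization.map_units (Localization.AtPrime p) s),
    smul_smul, IsLocalization.mk'_spec', algebraMap_smul, ← map_smul,
    Submodule.mkLinearMap_mem_localized_iff, hK]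

theorem covBy_localized_saturation_sup_span {K : Submodule R M}
    (hK : K.saturation p.primeCompl = K) {x : M} (hx : ∀ r : R, r • x ∈ K ↔ r ∈ p) :
    K.localized p.primeCompl ⋖
      ((K ⊔ Submodule.span R {x}).saturation p.primeCompl).localized p.primeCompl := by
  rw [Submodule.localized_saturation]
  dsimp only [Submodule.localized]
  rw [(Submodule.localized'gi (Localization p.primeCompl) p.primeCompl
      (LocalizedModule.mkLinearMap p.primeCompl M)).gc.l_sup,
    Submodule.localized'_span, Set.image_singleton]
  exact covBy_sup_span_singleton_of_smul_mem_iff (smul_mkLinearMap_mem_localized_iff p hK hx)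

theorem locLength_eq_of_covBy {n : ℕ} (K : ℕ → Submodule R M) (h0 : K 0 = ⊥) (hn : K n = ⊤)
    (hK : ∀ i < n, (K i).localized p.primeCompl ⋖ (K (i + 1)).localized p.primeCompl) :
    locLength R p M = n := by
  let s : CompositionSeries (Submodule (Localization p.primeCompl)
      (LocalizedModule p.primeCompl M)) :=
    ⟨n, fun i ↦ (K i).localized p.primeCompl, fun i ↦ hK i i.2⟩
  have hlen := Module.length_compositionSeries s (by simp [s, RelSeries.head, h0])
    (by simp [s, RelSeries.last, hn])
  rw [locLength, moduleLength, ← Module.coe_length, ← hlen]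
  simp [s]

end Localization

theorem exists_chain_of_forall_exists_lt {α β : Type*} [PartialOrder α] [OrderTop α]
    [WellFoundedGT α] [Nonempty β] (P : α → Prop) (Q : α → β → α → Prop)
    (step : ∀ a, P a → a ≠ ⊤ → ∃ b a', a < a' ∧ P a' ∧ Q a b a') {a₀ : α} (h₀ : P a₀) :
    ∃ (n : ℕ) (a : ℕ → α) (b : ℕ → β), a 0 = a₀ ∧ a n = ⊤ ∧
      ∀ i < n, a i < a (i + 1) ∧ P (a i) ∧ Q (a i) (b i) (a (i + 1)) := by
  induction a₀ using WellFoundedGT.induction with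
  | _ a₀ ih =>
  by_cases htop : a₀ = ⊤
  · exact ⟨0, fun _ ↦ a₀, fun _ ↦ Classical.arbitrary β, rfl, htop, by simp⟩
  obtain ⟨b₀, a₁, hlt, h₁, hQ⟩ := step a₀ h₀ htop
  obtain ⟨n, a, b, rfl, han, hab⟩ := ih a₁ hlt h₁
  refine ⟨n + 1, fun | 0 => a₀ | i + 1 => a i, fun | 0 => b₀ | i + 1 => b i, rfl, han, ?_⟩
  rintro (_ | i) hi
  · exact ⟨hlt, h₀, hQ⟩
  · exact hab i (by omega)

theorem exists_lt_saturation_sup_span {A R M : Type*} [CommRing A] [CommRing R] [Algebra A R]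
    [AddCommGroup M] [Module A M] [Module R M] [IsScalarTower A R M]
    (𝒜 : ℤ → Submodule A R) [GradedAlgebra 𝒜]
    {ℳ : ℤ → Submodule A M} [SetLike.GradedSMul 𝒜 ℳ] [DirectSum.Decomposition ℳ]
    {I : Ideal A} (hI : IsNilpotent I) [(I.map (algebraMap A R)).IsPrime]
    {t : ℤ} (hgen : Submodule.span R (ℳ t : Set M) = ⊤)
    {K : Submodule R M} (hKg : IsGradedSubmodule ℳ K)
    (hKs : K.saturation (I.map (algebraMap A R)).primeCompl = K) (hK : K ≠ ⊤) :
    ∃ x K', K < K' ∧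
      (IsGradedSubmodule ℳ K' ∧ K'.saturation (I.map (algebraMap A R)).primeCompl = K') ∧
      (x ∈ ℳ t ∧ (∀ r : R, r • x ∈ K ↔ r ∈ I.map (algebraMap A R)) ∧
        K' = (K ⊔ Submodule.span R {x}).saturation (I.map (algebraMap A R)).primeCompl) := by
  obtain ⟨z, hzt, hzK⟩ : ∃ z ∈ ℳ t, z ∉ K := by
    by_contra! h
    exact hK (eq_top_iff.mpr (hgen ▸ Submodule.span_le.mpr h))
  obtain ⟨a, ha⟩ := exists_smul_mem_iff_mem_map hI hKs hzK
  have haz : a • z ∉ K := fun h ↦ Ideal.IsPrime.ne_top ‹_› <|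
    (Ideal.eq_top_iff_one _).mpr ((ha 1).mp (by rwa [one_smul]))
  have hazt : a • z ∈ ℳ t := (ℳ t).smul_mem a hzt
  refine ⟨a • z, _, ?_, ⟨?_, Submodule.saturation_saturation⟩, hazt, ha, rfl⟩
  · exact SetLike.lt_iff_le_and_exists.mpr ⟨le_sup_left.trans Submodule.le_saturation, a • z,
      Submodule.le_saturation (Submodule.mem_sup_right (Submodule.mem_span_singleton_self _)), haz⟩
  · exact (hKg.sup (isGradedSubmodule_span_singleton 𝒜 hazt)).saturation_primeCompl 𝒜
      (Ideal.map_le_nilradical_of_isNilpotent _ hI)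

/-- The graded residue modules `M^i = M/K i` are encoded by the increasing chain of graded kernels
`K i`; the graded monomorphism `(R/𝔭)(−t) → M^i` by a homogeneous element `x i` of degree `t` whose
annihilator modulo `K i` is `𝔭`, so that `N^i = M/(K i + R·x i)`; and `X^i` by
`K (i+1)/(K i + R·x i) ⊆ N^i`, so that `N^i/X^i = M^{i+1}`. -/
theorem stmt5_general {A R M : Type*} [CommRing A] [IsArtinianRing A] [IsLocalRing A]
    [CommRing R] [Algebra A R] [IsNoetherianRing R]
    (𝒜 : ℤ → Submodule A R) [GradedAlgebra 𝒜]
    -- `𝔭 = 𝔪R` is a prime ideal: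
    [hp : (Ideal.map (algebraMap A R) (maximalIdeal A)).IsPrime]
    -- `M` is a nonzero finitely generated graded `R`-module:
    [AddCommGroup M] [Module A M] [Module R M] [IsScalarTower A R M] [Module.Finite R M]
    (ℳ : ℤ → Submodule A M) [SetLike.GradedSMul 𝒜 ℳ] [DirectSum.Decomposition ℳ]
    -- `Ass_R M = {𝔭}` and `M = R·M_t`:
    (hAss : associatedPrimes R M = {Ideal.map (algebraMap A R) (maximalIdeal A)})
    (t : ℤ) (hgen : Submodule.span R (ℳ t : Set M) = ⊤) :
    ∃ (i₀ : ℕ) (K : ℕ → Submodule R M) (x : ℕ → M),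
      K 0 = ⊥ ∧ K i₀ = ⊤ ∧
      (∀ i < i₀,
        -- `K i` is graded, i.e. `M^i = M/K i` is a graded residue module of `M`:
        IsGradedSubmodule ℳ (K i) ∧
        -- (a) `Ass_R M^i = {𝔭}` and `M^i = R·(M^i)_t`:
        associatedPrimes R (M ⧸ K i) = {Ideal.map (algebraMap A R) (maximalIdeal A)} ∧
        K i ⊔ Submodule.span R (ℳ t : Set M) = ⊤ ∧
        -- (c) first exact sequence: `x i` has degree `t` and generates a copy of
        -- `(R/𝔭)(−t)` inside `M^i`:
        x i ∈ ℳ t ∧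
        (∀ r : R, r • x i ∈ K i ↔ r ∈ Ideal.map (algebraMap A R) (maximalIdeal A)) ∧
        -- (c) second exact sequence: `K i + R·x i ≤ K (i+1)`, so that
        -- `X^i = K (i+1)/(K i + R·x i)` sits in `0 → X^i → N^i → M^{i+1} → 0`:
        K i ⊔ Submodule.span R {x i} ≤ K (i + 1) ∧
        -- (b) `𝔭 ∉ Ass_R X^i`:
        Ideal.map (algebraMap A R) (maximalIdeal A) ∉
          associatedPrimes R
            ↥((K (i + 1)).map (K i ⊔ Submodule.span R {x i}).mkQ)) ∧
      -- furthermore, `i₀ = ℓ_{R_𝔭}(M_𝔭)`: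
      (i₀ : ℤ) = locLength R (Ideal.map (algebraMap A R) (maximalIdeal A)) M := by
  set p := Ideal.map (algebraMap A R) (maximalIdeal A)
  have hI : IsNilpotent (maximalIdeal A) := (isArtinianRing_iff_isNilpotent_maximalIdeal A).mp ‹_›
  obtain ⟨i₀, K, x, hK0, hKtop, hK⟩ := exists_chain_of_forall_exists_lt
    (fun K : Submodule R M ↦ IsGradedSubmodule ℳ K ∧ K.saturation p.primeCompl = K)
    (fun K x K' ↦ x ∈ ℳ t ∧ (∀ r : R, r • x ∈ K ↔ r ∈ p) ∧
      K' = (K ⊔ Submodule.span R {x}).saturation p.primeCompl)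
    (fun _ hK hKtop ↦ exists_lt_saturation_sup_span 𝒜 hI hgen hK.1 hK.2 hKtop)
    ⟨isGradedSubmodule_bot, saturation_bot_eq_bot_of_associatedPrimes_subset hAss.subset⟩
  refine ⟨i₀, K, x, hK0, hKtop, fun i hi ↦ ?_, ?_⟩
  · obtain ⟨hlt, ⟨hKg, hKs⟩, hxt, hx, hsucc⟩ := hK i hi
    exact ⟨hKg, associatedPrimes_quotient_eq_singleton
      (Ideal.map_le_nilradical_of_isNilpotent _ hI) hlt.ne_top hKs, by rw [hgen, sup_top_eq],
      hxt, hx, hsucc ▸ Submodule.le_saturation, notMem_associatedPrimes_map_mkQ hsucc.le⟩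
  · refine (locLength_eq_of_covBy p K hK0 hKtop fun i hi ↦ ?_).symm
    obtain ⟨-, ⟨-, hKs⟩, -, hx, hsucc⟩ := hK i hi
    exact hsucc ▸ covBy_localized_saturation_sup_span p hKs hx

/-- **Proposition 2.5**: if `Ass_R M = {𝔭}` and `M = R·M_t ≠ 0`, there are families
`{M^i}` and `{X^i}` as in the commutative diagrams (*).  We encode the family of graded
residue modules `M^i = M/K i` by the increasing chain of graded kernels `K i`, the graded
monomorphism `(R/𝔭)(−t) → M^i` by a homogeneous element `x i` of degree `t` whose
annihilator modulo `K i` is `𝔭` (so `N^i = M/(K i + R·x i)`), and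
`X^i = K (i+1)/(K i + R·x i) ⊆ N^i` (so that `N^i/X^i = M^{i+1}` is automatic, giving the
exact sequences `0 → (R/𝔭)(−t) → M^i → N^i → 0` and `0 → X^i → N^i → M^{i+1} → 0`).
Moreover `i₀ = ℓ_{R_𝔭}(M_𝔭)`. -/
theorem stmt5 {A R M : Type*} [CommRing A] [IsArtinianRing A] [IsLocalRing A]
    [CommRing R] [Algebra A R] [IsNoetherianRing R]
    (𝒜 : ℤ → Submodule A R) [GradedAlgebra 𝒜]
    -- `R` is non-negatively graded with degree-zero part `A`, standard graded:
    (hneg : ∀ n < 0, 𝒜 n = ⊥) (h0 : 𝒜 0 = 1)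
    (hstd : ∀ n : ℤ, 0 ≤ n → 𝒜 (n + 1) = 𝒜 1 * 𝒜 n)
    -- `𝔭 = 𝔪R` is a prime ideal:
    [hp : (Ideal.map (algebraMap A R) (maximalIdeal A)).IsPrime]
    -- `M` is a nonzero finitely generated graded `R`-module:
    [AddCommGroup M] [Module A M] [Module R M] [IsScalarTower A R M] [Module.Finite R M]
    [Nontrivial M]
    (ℳ : ℤ → Submodule A M) [SetLike.GradedSMul 𝒜 ℳ] [DirectSum.Decomposition ℳ]
    -- `Ass_R M = {𝔭}` and `M = R·M_t`:
    (hAss : associatedPrimes R M = {Ideal.map (algebraMap A R) (maximalIdeal A)})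
    (t : ℤ) (hgen : Submodule.span R (ℳ t : Set M) = ⊤) :
    ∃ (i₀ : ℕ) (K : ℕ → Submodule R M) (x : ℕ → M),
      K 0 = ⊥ ∧ K i₀ = ⊤ ∧
      (∀ i < i₀,
        -- `K i` is graded, i.e. `M^i = M/K i` is a graded residue module of `M`:
        IsGradedSubmodule ℳ (K i) ∧
        -- (a) `Ass_R M^i = {𝔭}` and `M^i = R·(M^i)_t`:
        associatedPrimes R (M ⧸ K i) = {Ideal.map (algebraMap A R) (maximalIdeal A)} ∧
        K i ⊔ Submodule.span R (ℳ t : Set M) = ⊤ ∧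
        -- (c) first exact sequence: `x i` has degree `t` and generates a copy of
        -- `(R/𝔭)(−t)` inside `M^i`:
        x i ∈ ℳ t ∧
        (∀ r : R, r • x i ∈ K i ↔ r ∈ Ideal.map (algebraMap A R) (maximalIdeal A)) ∧
        -- (c) second exact sequence: `K i + R·x i ≤ K (i+1)`, so that
        -- `X^i = K (i+1)/(K i + R·x i)` sits in `0 → X^i → N^i → M^{i+1} → 0`:
        K i ⊔ Submodule.span R {x i} ≤ K (i + 1) ∧
        -- (b) `𝔭 ∉ Ass_R X^i`:
        Ideal.map (algebraMap A R) (maximalIdeal A) ∉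
          associatedPrimes R
            ↥((K (i + 1)).map (K i ⊔ Submodule.span R {x i}).mkQ)) ∧
      -- furthermore, `i₀ = ℓ_{R_𝔭}(M_𝔭)`:
      (i₀ : ℤ) = locLength R (Ideal.map (algebraMap A R) (maximalIdeal A)) M :=
  stmt5_general 𝒜 (hp := hp) ℳ hAss t hgen
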